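/- arXiv:1702.01169 — 2 statements merged into one kernel-verified Lean document; each statement's English description precedes it below -/
import Mathlib

section
/- Let a, b, σ² > 0 with b ≥ K·σ² for some K ≥ 1, and set t = K·σ²/b ∈ (0,1]. Then log₂(1 + a/(b + σ²)) − log₂(1 + t·a/(t·b + σ²)) ≤ log₂(1 + 1/K) ≤ log₂ e · (1/K). In particular, summing over K users, the total rate loss of the private messages satisfies Σ_{k=1}^K (R_k^NoRS − R_k^p) ≤ K·log₂(1 + 1/K) ≤ log₂ e. -/
/-!
Choosing the private power fraction `t` with `t b = K σ²` makes the private SINR equal to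
`t a / ((K + 1) σ²) = K a / ((K + 1) b)`, and then
`(1 + 1/K) (1 + SINR_private) = 1 + 1/K + a/b ≥ 1 + SINR_NoRS`.
Taking `log₂` bounds the per-user loss by `log₂ (1 + 1/K) ≤ (log₂ e)/K`, via `log (1 + x) ≤ x`.
-/

theorem one_add_div_le_mul_one_add_scaled {a b σ2 K t : ℝ} (ha : 0 ≤ a) (hb : 0 < b)
    (hσ : 0 < σ2) (hK : 0 < K) (htb : t * b = K * σ2) :
    1 + a / (b + σ2) ≤ (1 + 1 / K) * (1 + t * a / (t * b + σ2)) :=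
  calc 1 + a / (b + σ2)
      ≤ 1 + 1 / K + a / b := by
        have : a / (b + σ2) ≤ a / b := div_le_div_of_nonneg_left ha hb (by linarith)
        have : 0 ≤ 1 / K := by positivity
        linarith
    _ = (1 + 1 / K) * (1 + t * a / (t * b + σ2)) := by
        have ht : t = K * σ2 / b := by field_simp; linarith
        subst ht
        field_simp

theorem Real.logb_sub_logb_le_of_le_mul {B x y c : ℝ} (hB : 1 < B) (hx : 0 < x) (hy : 0 < y)
    (h : x ≤ c * y) : Real.logb B x - Real.logb B y ≤ Real.logb B c := by
  rw [← Real.logb_div hx.ne' hy.ne']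
  exact Real.logb_le_logb_of_le hB (div_pos hx hy) ((div_le_iff₀ hy).2 h)

theorem Real.logb_one_add_le_logb_exp_mul {B x : ℝ} (hB : 1 < B) (hx : -1 < x) :
    Real.logb B (1 + x) ≤ Real.logb B (Real.exp 1) * x := by
  rw [Real.logb, Real.logb, Real.log_exp, one_div_mul_eq_div]
  have := Real.log_le_sub_one_of_pos (show 0 < 1 + x by linarith)
  exact div_le_div_of_nonneg_right (by linarith) (Real.log_pos hB).le

/-- With `t = K σ²/b ∈ (0,1]` (requiring `b ≥ K σ²`, `K ≥ 1`),
the per-user rate loss is at most `log₂(1 + 1/K) ≤ (log₂ e)/K`; summing over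
`K` users gives a total private-rate loss of at most `log₂ e`. -/
theorem rate_splitting_rate_loss_bound
    (a b σ2 K : ℝ) (ha : 0 < a) (hb : 0 < b) (hσ : 0 < σ2)
    (hK : 1 ≤ K) (hbK : K * σ2 ≤ b)
    (t : ℝ) (ht : t = K * σ2 / b) :
    (t ∈ Set.Ioc (0 : ℝ) 1) ∧
    (Real.logb 2 (1 + a / (b + σ2)) - Real.logb 2 (1 + t * a / (t * b + σ2))
        ≤ Real.logb 2 (1 + 1 / K)) ∧
    (Real.logb 2 (1 + 1 / K) ≤ Real.logb 2 (Real.exp 1) * (1 / K)) ∧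
    (K * (Real.logb 2 (1 + a / (b + σ2)) - Real.logb 2 (1 + t * a / (t * b + σ2)))
        ≤ Real.logb 2 (Real.exp 1)) := by
  have hK0 : 0 < K := by linarith
  have ht0 : 0 < t := by rw [ht]; positivity
  have htb : t * b = K * σ2 := by rw [ht]; field_simp
  have hloss := Real.logb_sub_logb_le_of_le_mul one_lt_two (by positivity) (by positivity)
    (one_add_div_le_mul_one_add_scaled ha.le hb hσ hK0 htb)
  have hlog := Real.logb_one_add_le_logb_exp_mul one_lt_two
    (show -1 < 1 / K by linarith [one_div_pos.2 hK0])
  refine ⟨⟨ht0, by rwa [ht, div_le_one hb]⟩, hloss, hlog, ?_⟩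
  calc K * (Real.logb 2 (1 + a / (b + σ2)) - Real.logb 2 (1 + t * a / (t * b + σ2)))
      ≤ K * (Real.logb 2 (Real.exp 1) * (1 / K)) := by gcongr; exact hloss.trans hlog
    _ = Real.logb 2 (Real.exp 1) := by field_simp
end

section
/- Fix positive reals a (signal coefficient), b (interference coefficient), and σ² (noise). For the rate-splitting sum-rate R(t) = log₂(1 + (1−t)c/(t·d + σ²)) + Σ_{k=1}^K log₂(1 + t·a/(t·b + σ²)) with c, d > 0, if t is chosen so that t·b ≥ K σ² then R(1) − R(t) ≤ log₂ e − log₂(1 + (1−t)c/(t·d + σ²)); equivalently ΔR := R(t) − R(1) ≥ R^c(t) − log₂ e where R^c(t) is the common-message rate. -/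
/-!
The common rate vanishes at `t = 1`, so the claim is that the `K` private rates lose at most
`log₂ e` in total. With `A = 1 + a/(b+σ²)` and `B = 1 + t a/(t b+σ²)` one has
`A / B - 1 = a σ² (1-t) / ((b+σ²)(t(a+b)+σ²))`, and `K σ² ≤ t b` turns the numerator of
`K (A/B - 1)` into `(b(1-t))(t a)`, which is dominated factorwise by the denominator.
Then `K log (A/B) ≤ K (A/B - 1) ≤ 1`.
-/

open Real

theorem mul_log_snr_sub_log_snr_le_one {a b s t K : ℝ} (ha : 0 ≤ a) (hs : 0 < s)
    (ht0 : 0 < t) (ht1 : t ≤ 1) (hK : 0 ≤ K) (htb : K * s ≤ t * b) :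
    K * (log (1 + a / (b + s)) - log (1 + t * a / (t * b + s))) ≤ 1 := by
  have hb : 0 ≤ b := nonneg_of_mul_nonneg_right (by nlinarith) ht0
  have hbs : 0 < b + s := by positivity
  have htbs : 0 < t * b + s := by positivity
  have hA : 0 < 1 + a / (b + s) := by positivity
  have hB : 0 < 1 + t * a / (t * b + s) := by positivity
  have hden : 0 < (b + s) * (t * (a + b) + s) := by positivity
  have hratio : (1 + a / (b + s)) / (1 + t * a / (t * b + s)) - 1
      = a * s * (1 - t) / ((b + s) * (t * (a + b) + s)) := by
    field_simp
    ring
  have hnum : K * (a * s * (1 - t)) ≤ (b + s) * (t * (a + b) + s) :=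
    calc K * (a * s * (1 - t)) = (K * s) * (a * (1 - t)) := by ring
      _ ≤ (t * b) * (a * (1 - t)) := by gcongr
      _ = (b * (1 - t)) * (t * a) := by ring
      _ ≤ (b + s) * (t * (a + b) + s) := by
          gcongr <;> nlinarith
  calc K * (log (1 + a / (b + s)) - log (1 + t * a / (t * b + s)))
      = K * log ((1 + a / (b + s)) / (1 + t * a / (t * b + s))) := by
        rw [log_div hA.ne' hB.ne']
    _ ≤ K * ((1 + a / (b + s)) / (1 + t * a / (t * b + s)) - 1) := by
        gcongr
        exact log_le_sub_one_of_pos (div_pos hA hB)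
    _ ≤ 1 := by
        rw [hratio, ← mul_div_assoc, div_le_one hden]
        exact hnum

theorem rate_splitting_gain_bound_general
    (a b c d σ2 : ℝ) (ha : 0 < a)
    (hσ : 0 < σ2) (K : ℕ)
    (t : ℝ) (ht : t ∈ Set.Ioc (0 : ℝ) 1) (htb : (K : ℝ) * σ2 ≤ t * b)
    (Rc Rp R : ℝ → ℝ)
    (hRc : ∀ s, Rc s = Real.logb 2 (1 + (1 - s) * c / (s * d + σ2)))
    (hRp : ∀ s, Rp s = Real.logb 2 (1 + s * a / (s * b + σ2)))
    (hR : ∀ s, R s = Rc s + (K : ℝ) * Rp s) :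
    R 1 - R t ≤ Real.logb 2 (Real.exp 1) - Rc t := by
  obtain ⟨ht0, ht1⟩ := ht
  have hloss := mul_log_snr_sub_log_snr_le_one ha.le hσ ht0 ht1 (Nat.cast_nonneg K) htb
  have hRc1 : Rc 1 = 0 := by simp [hRc]
  have hgap : R 1 - R t = (K : ℝ) * (log (1 + a / (b + σ2)) - log (1 + t * a / (t * b + σ2)))
      / log 2 - Rc t := by
    simp only [hR, hRc1, hRp, logb, one_mul]
    ring
  rw [hgap, logb, log_exp]
  gcongr

/-- With `R(t) = R^c(t) + K R^p(t)` where
`R^c(t) = log₂(1+(1−t)c/(td+σ²))` and `R^p(t) = log₂(1+ta/(tb+σ²))`, if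
`t ∈ (0,1]` satisfies `t·b ≥ K σ²` then the rate-splitting gain satisfies
`R(t) − R(1) ≥ R^c(t) − log₂ e`. -/
theorem rate_splitting_gain_bound
    (a b c d σ2 : ℝ) (ha : 0 < a) (hb : 0 < b) (hc : 0 < c) (hd : 0 < d)
    (hσ : 0 < σ2) (K : ℕ) (hK : 1 ≤ K)
    (t : ℝ) (ht : t ∈ Set.Ioc (0 : ℝ) 1) (htb : (K : ℝ) * σ2 ≤ t * b)
    (Rc Rp R : ℝ → ℝ)
    (hRc : ∀ s, Rc s = Real.logb 2 (1 + (1 - s) * c / (s * d + σ2)))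
    (hRp : ∀ s, Rp s = Real.logb 2 (1 + s * a / (s * b + σ2)))
    (hR : ∀ s, R s = Rc s + (K : ℝ) * Rp s) :
    R 1 - R t ≤ Real.logb 2 (Real.exp 1) - Rc t :=
  rate_splitting_gain_bound_general a b c d σ2 ha hσ K t ht htb Rc Rp R hRc hRp hR
end
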